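/- Let T_d ≥ 1, T_k ≥ 1 and K ≥ 1 be integers, and let {v_i : 1 ≤ i ≤ T_d} together with {u_j(ξ) : 1 ≤ j ≤ T_k, 1 ≤ ξ ≤ K} be a family of mutually independent random variables, each uniformly distributed on [0, 1]. Define S_d = −(1/T_d) · Σ_{i=1}^{T_d} ln(1 − v_i) and, for each ξ, S_k(ξ) = −(1/T_k) · Σ_{j=1}^{T_k} ln(1 − u_j(ξ)). Then for all reals τ_d ≥ 1 and τ_k ≥ e/(e−1): Pr(S_d ≥ τ_d and max_{1 ≤ ξ ≤ K} S_k(ξ) > τ_k) = Pr(S_d ≥ τ_d) · Pr(max_{1 ≤ ξ ≤ K} S_k(ξ) > τ_k), and this joint probability is at most exp(T_d·(τ_d·(1/e − 1) + 1)) · (1 − (1 − exp(T_k·(τ_k·(1/e − 1) + 1)))^K). -/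

import Mathlib

/-!
For `U` uniform on `[0, 1]`, `-log (1 - U)` is exponentially distributed, so its moment
generating function at `t < 1` is `(1 - t)⁻¹`. The Chernoff bound at `t = 1 - 1/e` then gives
`μ (τ ≤ S) ≤ exp (T * (τ * (1/e - 1) + 1))` for the mean `S` of `T` independent such variables.
The dual statistic and the key statistics are functions of disjoint blocks of the independent
family, whence the factorization; the `K` key statistics are themselves mutually independent, so
all of them stay `≤ τ_k` with probability at least `(1 - ε)^K`, where `ε` is their Chernoff bound,
which the assumption on `τ_k` keeps `≤ 1`.
-/

open MeasureTheory ProbabilityTheory Real Function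

noncomputable def negLogMean {Ω : Type*} {n : ℕ} (X : Fin n → Ω → ℝ) (ω : Ω) : ℝ :=
  -(1 / (n : ℝ)) * ∑ i, log (1 - X i ω)

section NegLogMean

variable {Ω : Type*} {n : ℕ}

lemma natCast_mul_negLogMean (X : Fin n → Ω → ℝ) (ω : Ω) :
    (n : ℝ) * negLogMean X ω = ∑ i, -log (1 - X i ω) := by
  rcases n.eq_zero_or_pos with rfl | _
  · simp
  · rw [negLogMean, Finset.sum_neg_distrib]
    field_simp

lemma measurable_negLogMean {m : MeasurableSpace Ω} {X : Fin n → Ω → ℝ}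
    (hX : ∀ i, Measurable (X i)) : Measurable (negLogMean X) := by
  unfold negLogMean
  fun_prop

end NegLogMean

lemma exp_mul_neg_log_one_sub_ae_eq (t : ℝ) :
    (fun x => exp (t * -log (1 - x)))
      =ᵐ[volume.restrict (Set.Icc (0 : ℝ) 1)] fun x => (1 - x) ^ (-t) := by
  have hne : ∀ᵐ x : ℝ, x ≠ 1 := by simp [ae_iff]
  rw [Filter.EventuallyEq, ae_restrict_iff' measurableSet_Icc]
  filter_upwards [hne] with x hx1 hx
  rw [rpow_def_of_pos (sub_pos.2 (lt_of_le_of_ne hx.2 hx1))]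
  ring_nf

lemma integrableOn_one_sub_rpow_neg {t : ℝ} (ht : t < 1) :
    IntegrableOn (fun x : ℝ => (1 - x) ^ (-t)) (Set.Icc 0 1) := by
  have h : IntervalIntegrable (fun x : ℝ => (1 - x) ^ (-t)) volume 0 1 := by
    have h' : IntervalIntegrable (fun x : ℝ => x ^ (-t)) volume 0 1 :=
      intervalIntegral.intervalIntegrable_rpow' (by linarith)
    simpa using (h'.comp_sub_left 1).symm
  rw [IntegrableOn, ← Measure.restrict_congr_set Ioc_ae_eq_Icc]
  exact (intervalIntegrable_iff_integrableOn_Ioc_of_le zero_le_one).1 h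

lemma integral_one_sub_rpow_neg {t : ℝ} (ht : t < 1) :
    ∫ x in Set.Icc (0 : ℝ) 1, (1 - x) ^ (-t) = (1 - t)⁻¹ := by
  rw [integral_Icc_eq_integral_Ioc, ← intervalIntegral.integral_of_le zero_le_one,
    intervalIntegral.integral_comp_sub_left (fun x : ℝ => x ^ (-t)) 1, sub_self, sub_zero,
    integral_rpow (Or.inl (by linarith)), one_rpow, zero_rpow (by linarith)]
  field_simp
  ring

section Uniform

variable {Ω : Type*} [MeasurableSpace Ω] {μ : Measure Ω} {X : Ω → ℝ} {t : ℝ}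

lemma integrable_exp_mul_neg_log_one_sub (hX : Measurable X)
    (hunif : μ.map X = volume.restrict (Set.Icc 0 1)) (ht : t < 1) :
    Integrable (fun ω => exp (t * -log (1 - X ω))) μ := by
  have hg : Measurable fun x => exp (t * -log (1 - x)) := by fun_prop
  have h : Integrable (fun x => exp (t * -log (1 - x))) (μ.map X) := by
    rw [hunif]
    exact (integrableOn_one_sub_rpow_neg ht).congr (exp_mul_neg_log_one_sub_ae_eq t).symm
  exact (integrable_map_measure hg.aestronglyMeasurable hX.aemeasurable).1 h

lemma mgf_neg_log_one_sub (hX : Measurable X)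
    (hunif : μ.map X = volume.restrict (Set.Icc 0 1)) (ht : t < 1) :
    mgf (fun ω => -log (1 - X ω)) μ t = (1 - t)⁻¹ := by
  have hg : Measurable fun x => exp (t * -log (1 - x)) := by fun_prop
  change ∫ ω, (fun x => exp (t * -log (1 - x))) (X ω) ∂μ = _
  rw [← integral_map hX.aemeasurable hg.aestronglyMeasurable, hunif,
    integral_congr_ae (exp_mul_neg_log_one_sub_ae_eq t), integral_one_sub_rpow_neg ht]

end Uniform

section Chernoff

variable {Ω : Type*} [MeasurableSpace Ω] {μ : Measure Ω} [IsProbabilityMeasure μ] {n : ℕ}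
  {X : Fin n → Ω → ℝ}

lemma measureReal_le_negLogMean_le (hmeas : ∀ i, Measurable (X i)) (hindep : iIndepFun X μ)
    (hunif : ∀ i, μ.map (X i) = volume.restrict (Set.Icc 0 1)) {t : ℝ} (ht0 : 0 ≤ t)
    (ht1 : t < 1) (τ : ℝ) :
    μ.real {ω | τ ≤ negLogMean X ω} ≤ exp (-t * (n * τ)) * (1 - t)⁻¹ ^ n := by
  set Y : Fin n → Ω → ℝ := fun i ω => -log (1 - X i ω)
  have hYmeas : ∀ i, Measurable (Y i) := fun i => by fun_prop
  have hYindep : iIndepFun Y μ :=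
    hindep.comp (fun _ x => -log (1 - x)) fun _ => by fun_prop
  have hsub : {ω | τ ≤ negLogMean X ω} ⊆ {ω | n * τ ≤ (∑ i, Y i) ω} := fun ω hω => by
    have h := mul_le_mul_of_nonneg_left hω.out (Nat.cast_nonneg (α := ℝ) n)
    rw [natCast_mul_negLogMean] at h
    simpa only [Set.mem_ofPred_eq, Finset.sum_apply] using h
  have hint : Integrable (fun ω => exp (t * (∑ i, Y i) ω)) μ :=
    hYindep.integrable_exp_mul_sum hYmeas fun i _ =>
      integrable_exp_mul_neg_log_one_sub (hmeas i) (hunif i) ht1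
  calc μ.real {ω | τ ≤ negLogMean X ω}
      ≤ μ.real {ω | n * τ ≤ (∑ i, Y i) ω} := measureReal_mono hsub
    _ ≤ exp (-t * (n * τ)) * mgf (∑ i, Y i) μ t := measure_ge_le_exp_mul_mgf _ ht0 hint
    _ = exp (-t * (n * τ)) * (1 - t)⁻¹ ^ n := by
      simp [hYindep.mgf_sum hYmeas, Y, mgf_neg_log_one_sub (hmeas _) (hunif _) ht1]

/-- The Chernoff bound at `t = 1 - 1/e`, where the moment generating function `(1 - t)⁻¹` of
`-log (1 - U)` equals `e`. -/
lemma measure_le_negLogMean_le (hmeas : ∀ i, Measurable (X i)) (hindep : iIndepFun X μ)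
    (hunif : ∀ i, μ.map (X i) = volume.restrict (Set.Icc 0 1)) (τ : ℝ) :
    μ {ω | τ ≤ negLogMean X ω} ≤
      ENNReal.ofReal (exp (n * (τ * (1 / exp 1 - 1) + 1))) := by
  have he : (exp 1)⁻¹ < 1 := inv_lt_one_of_one_lt₀ (one_lt_exp_iff.2 one_pos)
  have h := measureReal_le_negLogMean_le hmeas hindep hunif
    (sub_nonneg.2 he.le) (sub_lt_self 1 (inv_pos.2 (exp_pos 1))) τ
  rw [sub_sub_cancel, inv_inv, ← exp_nat_mul, mul_one, ← exp_add] at h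
  rw [← ofReal_measureReal]
  refine ENNReal.ofReal_le_ofReal (h.trans_eq (congrArg exp ?_))
  ring

end Chernoff

lemma measurable_biSup_comap {Ω ι β : Type*} [mβ : MeasurableSpace β] {f : ι → Ω → β}
    {S : Set ι} {i : ι} (hi : i ∈ S) :
    Measurable[⨆ j ∈ S, mβ.comap (f j)] (f i) :=
  (comap_measurable _).mono (le_biSup (fun j => mβ.comap (f j)) hi) le_rfl

lemma iIndep.iIndep_biSup {Ω ι κ : Type*} {mΩ : MeasurableSpace Ω} {μ : Measure Ω}
    {m : ι → MeasurableSpace Ω} (h_le : ∀ i, m i ≤ mΩ) (h : iIndep m μ) {g : κ → Set ι}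
    (hg : Pairwise (Disjoint on g)) :
    iIndep (fun k => ⨆ i ∈ g k, m i) μ := by
  classical
  rw [iIndep_iff]
  intro s C hC
  induction s using Finset.induction_on with
  | empty => simp [h.isProbabilityMeasure.measure_univ]
  | insert a s ha ih =>
    have hdisj : Disjoint (g a) (⋃ k ∈ (s : Set κ), g k) :=
      Set.disjoint_iUnion₂_right.2 fun k hk => hg fun hak => ha (hak ▸ hk)
    have hrest : MeasurableSet[⨆ i ∈ ⋃ k ∈ (s : Set κ), g k, m i] (⋂ k ∈ s, C k) :=
      .biInter s.countable_toSet fun k hk =>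
        (biSup_mono (f := m) (Set.subset_biUnion_of_mem (u := g) hk) : _ ≤ _) _
          (hC k (Finset.mem_insert_of_mem hk))
    rw [Finset.set_biInter_insert, Finset.prod_insert ha,
      ← ih fun k hk => hC k (Finset.mem_insert_of_mem hk)]
    exact (Indep_iff _ _ _).1 (indep_iSup_of_disjoint h_le h hdisj) _ _
      (hC a (Finset.mem_insert_self a s)) hrest

lemma measure_lt_iSup_le_of_iIndep {Ω ι : Type*} [Fintype ι] {mΩ : MeasurableSpace Ω}
    {μ : Measure Ω} [IsProbabilityMeasure μ] {m : ι → MeasurableSpace Ω} (h_le : ∀ i, m i ≤ mΩ)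
    (h : iIndep m μ) {S : ι → Ω → ℝ} (hS : ∀ i, Measurable[m i] (S i)) {τ ε : ℝ} (hτ : 0 ≤ τ)
    (hε0 : 0 ≤ ε) (hε1 : ε ≤ 1) (htail : ∀ i, μ {ω | τ ≤ S i ω} ≤ ENNReal.ofReal ε) :
    μ {ω | τ < ⨆ i, S i ω} ≤ ENNReal.ofReal (1 - (1 - ε) ^ Fintype.card ι) := by
  set D : ι → Set Ω := fun i => {ω | S i ω ≤ τ}
  have hDm : ∀ i, MeasurableSet[m i] (D i) := fun i => measurableSet_le (hS i) measurable_const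
  have hD : ∀ i, ENNReal.ofReal (1 - ε) ≤ μ (D i) := fun i => by
    have hcompl : D i = {ω | τ < S i ω}ᶜ := by ext; simp [D]
    rw [hcompl, prob_compl_eq_one_sub (h_le i _ (measurableSet_lt measurable_const (hS i))),
      ENNReal.ofReal_sub _ hε0, ENNReal.ofReal_one]
    exact tsub_le_tsub_left
      ((measure_mono (Set.ofPred_subset_ofPred.2 fun _ => le_of_lt)).trans (htail i)) 1
  -- `0 ≤ τ` is what handles an empty `ι`, where `⨆ i, S i ω = 0`.
  have hsub : {ω | τ < ⨆ i, S i ω} ⊆ (⋂ i, D i)ᶜ := fun ω hω hωD =>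
    (Real.iSup_le (fun i => (Set.mem_iInter.1 hωD i : S i ω ≤ τ)) hτ).not_gt hω
  calc μ {ω | τ < ⨆ i, S i ω}
      ≤ μ (⋂ i, D i)ᶜ := measure_mono hsub
    _ = 1 - ∏ i, μ (D i) := by
      rw [prob_compl_eq_one_sub (.iInter fun i => h_le i _ (hDm i)), h.meas_iInter hDm]
    _ ≤ 1 - ∏ _i : ι, ENNReal.ofReal (1 - ε) :=
      tsub_le_tsub_left (Finset.prod_le_prod' fun i _ => hD i) 1
    _ = ENNReal.ofReal (1 - (1 - ε) ^ Fintype.card ι) := by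
      rw [Finset.prod_const, Finset.card_univ, ← ENNReal.ofReal_pow (by linarith),
        ENNReal.ofReal_sub _ (pow_nonneg (by linarith) _), ENNReal.ofReal_one]

lemma mul_one_div_exp_sub_one_add_one_nonpos {τ : ℝ} (hτ : exp 1 / (exp 1 - 1) ≤ τ) :
    τ * (1 / exp 1 - 1) + 1 ≤ 0 := by
  have he : 0 < exp 1 - 1 := sub_pos.2 (one_lt_exp_iff.2 one_pos)
  rw [div_le_iff₀ he] at hτ
  have : τ * (1 / exp 1 - 1) + 1 = (exp 1 - τ * (exp 1 - 1)) / exp 1 := by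
    field_simp
    ring
  rw [this]
  exact div_nonpos_of_nonpos_of_nonneg (by linarith) (exp_pos 1).le

section Keys

variable {Ω κ : Type*} [Fintype κ] [MeasurableSpace Ω] {μ : Measure Ω} [IsProbabilityMeasure μ]
  {n : ℕ} {X : Fin n × κ → Ω → ℝ}

lemma measure_lt_iSup_negLogMean_le (hmeas : ∀ q, Measurable (X q)) (hindep : iIndepFun X μ)
    (hunif : ∀ q, μ.map (X q) = volume.restrict (Set.Icc 0 1)) {τ : ℝ}
    (hτ : exp 1 / (exp 1 - 1) ≤ τ) :
    μ {ω | τ < ⨆ ξ, negLogMean (fun j => X (j, ξ)) ω} ≤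
      ENNReal.ofReal (1 - (1 - exp (n * (τ * (1 / exp 1 - 1) + 1))) ^ Fintype.card κ) := by
  have hτ0 : 0 ≤ τ := (div_pos (exp_pos 1) (sub_pos.2 (one_lt_exp_iff.2 one_pos))).le.trans hτ
  have hexp : exp (n * (τ * (1 / exp 1 - 1) + 1)) ≤ 1 :=
    exp_le_one_iff.2 (mul_nonpos_of_nonneg_of_nonpos (Nat.cast_nonneg _)
      (mul_one_div_exp_sub_one_add_one_nonpos hτ))
  have h_le : ∀ q, MeasurableSpace.comap (X q) inferInstance ≤ ‹_› := fun q => (hmeas q).comap_le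
  have hkeys : Pairwise (Disjoint on fun ξ : κ => Set.range fun j : Fin n => (j, ξ)) :=
    fun ξ ξ' hne => Set.disjoint_range_iff.2 fun j j' h => hne (Prod.ext_iff.1 h).2
  refine measure_lt_iSup_le_of_iIndep (fun ξ => iSup₂_le fun q _ => h_le q)
    (iIndep.iIndep_biSup h_le hindep.iIndep hkeys)
    (fun ξ => measurable_negLogMean fun j =>
      measurable_biSup_comap (Set.mem_range_self (f := fun j : Fin n => (j, ξ)) j))
    hτ0 (exp_nonneg _) hexp fun ξ => measure_le_negLogMean_le (fun j => hmeas _) ?_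
      (fun j => hunif _) τ
  exact hindep.precomp fun j j' h => (Prod.ext_iff.1 h).1

end Keys

theorem hdw_false_positive_bound_general
    {Ω : Type*} [MeasurableSpace Ω] (μ : Measure Ω) [IsProbabilityMeasure μ]
    (Td Tk K : ℕ)
    (w : (Fin Td ⊕ Fin Tk × Fin K) → Ω → ℝ) (hmeas : ∀ p, Measurable (w p))
    (hindep : iIndepFun w μ)
    (hunif : ∀ p, Measure.map (w p) μ = volume.restrict (Set.Icc (0 : ℝ) 1))
    (τd τk : ℝ) (hτk : Real.exp 1 / (Real.exp 1 - 1) ≤ τk) :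
    μ ({ω | τd ≤ -(1 / (Td : ℝ)) * ∑ i : Fin Td, Real.log (1 - w (Sum.inl i) ω)} ∩
        {ω | τk < ⨆ ξ : Fin K,
          -(1 / (Tk : ℝ)) * ∑ j : Fin Tk, Real.log (1 - w (Sum.inr (j, ξ)) ω)}) =
      μ {ω | τd ≤ -(1 / (Td : ℝ)) * ∑ i : Fin Td, Real.log (1 - w (Sum.inl i) ω)} *
      μ {ω | τk < ⨆ ξ : Fin K,
          -(1 / (Tk : ℝ)) * ∑ j : Fin Tk, Real.log (1 - w (Sum.inr (j, ξ)) ω)} ∧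
    μ ({ω | τd ≤ -(1 / (Td : ℝ)) * ∑ i : Fin Td, Real.log (1 - w (Sum.inl i) ω)} ∩
        {ω | τk < ⨆ ξ : Fin K,
          -(1 / (Tk : ℝ)) * ∑ j : Fin Tk, Real.log (1 - w (Sum.inr (j, ξ)) ω)}) ≤
      ENNReal.ofReal (Real.exp ((Td : ℝ) * (τd * (1 / Real.exp 1 - 1) + 1)) *
        (1 - (1 - Real.exp ((Tk : ℝ) * (τk * (1 / Real.exp 1 - 1) + 1))) ^ K)) := by
  set m : (Fin Td ⊕ Fin Tk × Fin K) → MeasurableSpace Ω := fun p => .comap (w p) inferInstance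
  have h_le : ∀ p, m p ≤ ‹_› := fun p => (hmeas p).comap_le
  have hSd : Measurable[⨆ p ∈ Set.range .inl, m p] (negLogMean fun i => w (.inl i)) :=
    measurable_negLogMean fun i => measurable_biSup_comap ⟨i, rfl⟩
  have hmax : Measurable[⨆ p ∈ Set.range .inr, m p]
      fun ω => ⨆ ξ, negLogMean (fun j => w (.inr (j, ξ))) ω :=
    .iSup fun ξ => measurable_negLogMean fun j => measurable_biSup_comap ⟨(j, ξ), rfl⟩
  have hinter := (Indep_iff _ _ _).1 (indep_iSup_of_disjoint h_le hindep.iIndep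
    (Set.disjoint_range_iff.2 fun _ _ => Sum.inl_ne_inr)) _ _
    (hSd (measurableSet_Ici (a := τd))) (hmax (measurableSet_Ioi (a := τk)))
  refine ⟨hinter, hinter.trans_le ?_⟩
  have hkeys := measure_lt_iSup_negLogMean_le (fun q => hmeas _)
    (hindep.precomp Sum.inr_injective) (fun q => hunif _) hτk
  rw [Fintype.card_fin] at hkeys
  rw [ENNReal.ofReal_mul (exp_nonneg _)]
  exact mul_le_mul' (measure_le_negLogMean_le (fun i => hmeas _)
    (hindep.precomp Sum.inl_injective) (fun i => hunif _) τd) hkeys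

/-- False positive bound for the Hybrid Dual Watermark: with all `w p` mutually independent
and uniform on `[0,1]`, `S_d = −(1/T_d) ∑ i, ln(1 − w (inl i))` and
`S_k(ξ) = −(1/T_k) ∑ j, ln(1 − w (inr (j, ξ)))`, then for `τ_d ≥ 1` and `τ_k ≥ e/(e−1)`, the
joint probability `Pr(S_d ≥ τ_d ∩ max_ξ S_k(ξ) > τ_k)` factorizes as the product of the
two probabilities and is bounded by
`exp(T_d·(τ_d·(1/e − 1) + 1)) · (1 − (1 − exp(T_k·(τ_k·(1/e − 1) + 1)))^K)`. -/
theorem hdw_false_positive_bound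
    {Ω : Type*} [MeasurableSpace Ω] (μ : Measure Ω) [IsProbabilityMeasure μ]
    (Td Tk K : ℕ) (hTd : 1 ≤ Td) (hTk : 1 ≤ Tk) (hK : 1 ≤ K)
    (w : (Fin Td ⊕ Fin Tk × Fin K) → Ω → ℝ) (hmeas : ∀ p, Measurable (w p))
    (hindep : iIndepFun w μ)
    (hunif : ∀ p, Measure.map (w p) μ = volume.restrict (Set.Icc (0 : ℝ) 1))
    (τd τk : ℝ) (hτd : 1 ≤ τd) (hτk : Real.exp 1 / (Real.exp 1 - 1) ≤ τk) :
    μ ({ω | τd ≤ -(1 / (Td : ℝ)) * ∑ i : Fin Td, Real.log (1 - w (Sum.inl i) ω)} ∩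
        {ω | τk < ⨆ ξ : Fin K,
          -(1 / (Tk : ℝ)) * ∑ j : Fin Tk, Real.log (1 - w (Sum.inr (j, ξ)) ω)}) =
      μ {ω | τd ≤ -(1 / (Td : ℝ)) * ∑ i : Fin Td, Real.log (1 - w (Sum.inl i) ω)} *
      μ {ω | τk < ⨆ ξ : Fin K,
          -(1 / (Tk : ℝ)) * ∑ j : Fin Tk, Real.log (1 - w (Sum.inr (j, ξ)) ω)} ∧
    μ ({ω | τd ≤ -(1 / (Td : ℝ)) * ∑ i : Fin Td, Real.log (1 - w (Sum.inl i) ω)} ∩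
        {ω | τk < ⨆ ξ : Fin K,
          -(1 / (Tk : ℝ)) * ∑ j : Fin Tk, Real.log (1 - w (Sum.inr (j, ξ)) ω)}) ≤
      ENNReal.ofReal (Real.exp ((Td : ℝ) * (τd * (1 / Real.exp 1 - 1) + 1)) *
        (1 - (1 - Real.exp ((Tk : ℝ) * (τk * (1 / Real.exp 1 - 1) + 1))) ^ K)) :=
  hdw_false_positive_bound_general μ Td Tk K w hmeas hindep hunif τd τk hτk
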